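/- For every group A and every group G, there exist a group D belonging to C(A) and a homomorphism φ : D → G such that for every group L belonging to C(A), composition with φ induces a bijection Hom(L, D) → Hom(L, G). (In other words, the class C(A) is co-reflective, with co-reflection the A-cellular cover.) -/

import Mathlib

open CategoryTheory Limits

universe u v

/-- A class of groups closed under isomorphisms. -/
def IsoClosed (C : GrpCat.{u} → Prop) : Prop :=
  ∀ ⦃G H : GrpCat.{u}⦄, (G ≅ H) → C G → C H

/-- A class of groups is closed under direct limits if it contains the colimit
(computed in the category of groups) of every small diagram all of whose
objects belong to the class. -/
def ColimClosed (C : GrpCat.{u} → Prop) : Prop :=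
  ∀ (J : Type u) [SmallCategory J] (F : J ⥤ GrpCat.{u}) (c : Cocone F),
    IsColimit c → (∀ j, C (F.obj j)) → C c.pt

/-- `C(A)`: the smallest class of groups containing `A` and closed under
isomorphisms and direct limits. -/
def cellClass (A G : GrpCat.{u}) : Prop :=
  ∀ C : GrpCat.{u} → Prop, IsoClosed C → ColimClosed C → C A → C G

/-!
The cover is a quotient of the free product `F` of copies of `A`, one for each homomorphism
`A →* G`, so that `Hom(A, -) → Hom(A, G)` is already surjective on `F`. Injectivity is forced by
identifying `f a` with `g a` whenever two maps `f g : A →* F ⧸ c` agree over `G`; doing this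
repeatedly, the least fixed point of the resulting monotone operator on congruences below the
kernel of `F → G` gives the cover. Each application of the operator is a multicoequalizer of maps
out of `A`, and suprema of congruences are wide pushouts under `F`, so induction along the least
fixed point keeps the quotient in `C(A)`. Finally, the groups `L` for which postcomposition with
the cover map is bijective on `Hom(L, -)` form a class closed under isomorphisms and colimits
containing `A`, hence they include `C(A)`.
-/

open Function

section Postcomposition

variable {𝒞 : Type*} [Category 𝒞] {D G : 𝒞} (φ : D ⟶ G)

lemma bijective_postcomp_of_iso {X Y : 𝒞} (e : X ≅ Y)
    (h : Bijective fun f : X ⟶ D => f ≫ φ) : Bijective fun f : Y ⟶ D => f ≫ φ := by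
  have : (fun f : Y ⟶ D => f ≫ φ) =
      e.homCongr (Iso.refl G) ∘ (fun f : X ⟶ D => f ≫ φ) ∘ e.symm.homCongr (Iso.refl D) := by
    ext f; simp
  rw [this]
  exact (Equiv.bijective _).comp (h.comp (Equiv.bijective _))

lemma bijective_postcomp_of_isColimit {J : Type*} [Category J] {F : J ⥤ 𝒞} {c : Cocone F}
    (hc : IsColimit c) (h : ∀ j, Bijective fun f : F.obj j ⟶ D => f ≫ φ) :
    Bijective fun f : c.pt ⟶ D => f ≫ φ := by
  refine ⟨fun f g hfg => hc.hom_ext fun j => (h j).1 ?_, fun k => ?_⟩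
  · simpa using congrArg (c.ι.app j ≫ ·) hfg
  choose m hm using fun j => (h j).2 (c.ι.app j ≫ k)
  let lift : Cocone F :=
    { pt := D
      ι :=
        { app := m
          naturality := fun j j' u => (h j).1 <| by simp [hm] } }
  exact ⟨hc.desc lift, hc.hom_ext fun j => by simp [← hm j, lift]⟩

end Postcomposition

lemma GrpCat.bijective_postcomp_ofHom_iff {L D G : GrpCat.{u}} (φ : D →* G) :
    (Bijective fun f : L ⟶ D => f ≫ GrpCat.ofHom φ) ↔ Bijective fun f : L →* D => φ.comp f := by
  rw [← (ConcreteCategory.homEquiv (X := L) (Y := G)).comp_bijective,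
    ← (ConcreteCategory.homEquiv (X := L) (Y := D)).symm.bijective_comp]
  rfl

lemma cellClass.bijective_postcomp {A L D G : GrpCat.{u}} (hL : cellClass A L) (φ : D ⟶ G)
    (hA : Bijective fun f : A ⟶ D => f ≫ φ) : Bijective fun f : L ⟶ D => f ≫ φ :=
  hL (fun X => Bijective fun f : X ⟶ D => f ≫ φ) (fun _ _ e => bijective_postcomp_of_iso φ e)
    (fun _ _ _ _ hc => bijective_postcomp_of_isColimit φ hc) hA

namespace ColimClosed

variable {C : GrpCat.{u} → Prop}

lemma coprodI (hC : ColimClosed C) {ι : Type u} {M : ι → Type u} [∀ i, Group (M i)]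
    (hM : ∀ i, C (GrpCat.of (M i))) : C (GrpCat.of (Monoid.CoprodI M)) := by
  let t : Cofan fun i => GrpCat.of (M i) :=
    Cofan.mk (GrpCat.of (Monoid.CoprodI M)) fun i => GrpCat.ofHom Monoid.CoprodI.of
  have ht : IsColimit t := Cofan.IsColimit.mk t
    (fun s => GrpCat.ofHom (Monoid.CoprodI.lift fun i => (s.inj i).hom))
    (fun s i => by ext; simp [t])
    (fun s m hm => by
      ext1
      refine Monoid.CoprodI.ext_hom _ _ fun i => ?_
      ext x
      simp [← hm i, t])
  exact hC _ _ t ht fun ⟨i⟩ => hM i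

lemma quotient_sSup (hC : ColimClosed C) {X : Type u} [Group X] (hX : C (GrpCat.of X))
    {S : Set (Con X)} (hS : ∀ c ∈ S, C (GrpCat.of c.Quotient)) :
    C (GrpCat.of (sSup S).Quotient) := by
  let F := WidePushoutShape.wideSpan (GrpCat.of X) (fun c : S => GrpCat.of c.1.Quotient)
    fun c => GrpCat.ofHom c.1.mk'
  have le_ker (s : Cocone F) : sSup S ≤ Con.ker (s.ι.app none).hom :=
    sSup_le fun c hc x y hxy => by
      change (s.ι.app none) x = (s.ι.app none) y
      rw [← s.w (WidePushoutShape.Hom.init ⟨c, hc⟩)]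
      exact congrArg (s.ι.app _) (c.eq.2 hxy)
  let t : Cocone F := WidePushoutShape.mkCocone (GrpCat.ofHom (sSup S).mk')
    (fun c => GrpCat.ofHom (Con.map _ _ (le_sSup c.2))) fun c => rfl
  have ht : IsColimit t :=
    { desc := fun s => GrpCat.ofHom ((sSup S).lift _ (le_ker s))
      fac
        | _, none => rfl
        | s, some c => GrpCat.hom_ext <| Con.hom_ext <| MonoidHom.ext fun x =>
            (ConcreteCategory.congr_hom (s.w (WidePushoutShape.Hom.init c)) x).symm
      uniq s m hm := GrpCat.hom_ext <| Con.hom_ext <| MonoidHom.ext fun x =>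
        ConcreteCategory.congr_hom (hm none) x }
  exact hC _ F t ht fun j => j.rec hX fun c => hS c c.2

lemma quotient_sup_conGen (hC : ColimClosed C) {X : Type u} [Group X] {c : Con X}
    (hc : C (GrpCat.of c.Quotient)) {P : Type u} {Y : P → Type u} [∀ p, Group (Y p)]
    (hY : ∀ p, C (GrpCat.of (Y p))) (f g : ∀ p, Y p →* c.Quotient) :
    C (GrpCat.of (c ⊔ conGen fun x x' => ∃ p y, f p y = c.mk' x ∧ g p y = c.mk' x').Quotient) := by
  set e := c ⊔ conGen fun x x' => ∃ p y, f p y = c.mk' x ∧ g p y = c.mk' x'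
  let I : MultispanIndex ⟨P, PUnit.{u + 1}, fun _ => ⟨⟩, fun _ => ⟨⟩⟩ GrpCat.{u} :=
    ⟨fun p => GrpCat.of (Y p), fun _ => GrpCat.of c.Quotient,
      fun p => GrpCat.ofHom (f p), fun p => GrpCat.ofHom (g p)⟩
  let t : Multicofork I := Multicofork.ofπ I (GrpCat.of e.Quotient)
    (fun _ => GrpCat.ofHom (Con.map c e le_sup_left)) fun p => by
      ext y
      obtain ⟨x, hx⟩ := c.mk'_surjective (f p y)
      obtain ⟨x', hx'⟩ := c.mk'_surjective (g p y)
      change Con.map c e le_sup_left (f p y) = Con.map c e le_sup_left (g p y)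
      rw [← hx, ← hx']
      exact e.eq.2 (le_sup_right (a := c) (ConGen.Rel.of x x' ⟨p, y, hx.symm, hx'.symm⟩))
  have le_ker (s : Multicofork I) : e ≤ Con.ker ((s.π ⟨⟩).hom.comp c.mk') := by
    refine sup_le (fun x x' h => congrArg (s.π ⟨⟩) (c.eq.2 h)) (Con.conGen_le.2 ?_)
    rintro x x' ⟨p, y, hx, hx'⟩
    change s.π ⟨⟩ (c.mk' x) = s.π ⟨⟩ (c.mk' x')
    rw [← hx, ← hx']
    exact ConcreteCategory.congr_hom (s.condition p) y
  have ht : IsColimit t := Multicofork.IsColimit.mk t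
    (fun s => GrpCat.ofHom (e.lift _ (le_ker s)))
    (fun s _ => GrpCat.hom_ext <| Con.hom_ext <| MonoidHom.ext fun _ => rfl)
    (fun s m hm => GrpCat.hom_ext <| Con.hom_ext <| MonoidHom.ext fun x =>
      ConcreteCategory.congr_hom (hm ⟨⟩) (c.mk' x))
  exact hC _ _ t ht fun
    | .left p => hY p
    | .right _ => hc

end ColimClosed

namespace CellularCover

variable (A G : Type u) [Group A] [Group G]

abbrev FreeProd : Type u := Monoid.CoprodI fun _ : A →* G => A

def eval : FreeProd A G →* G := Monoid.CoprodI.lift fun f => f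

variable {A G}

def AgreeingPairs (c : Con (FreeProd A G)) (hc : c ≤ Con.ker (eval A G)) : Type u :=
  {p : (A →* c.Quotient) × (A →* c.Quotient) //
    (c.lift (eval A G) hc).comp p.1 = (c.lift (eval A G) hc).comp p.2}

def glue (c : Con (FreeProd A G)) (hc : c ≤ Con.ker (eval A G)) :
    FreeProd A G → FreeProd A G → Prop :=
  fun x x' => ∃ (p : AgreeingPairs c hc) (a : A), p.1.1 a = c.mk' x ∧ p.1.2 a = c.mk' x'

lemma glue_mono {c d : Con (FreeProd A G)} (hcd : c ≤ d) (hc : c ≤ Con.ker (eval A G))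
    (hd : d ≤ Con.ker (eval A G)) {x x' : FreeProd A G} : glue c hc x x' → glue d hd x x' := by
  rintro ⟨⟨⟨f, g⟩, hfg⟩, a, hx, hx'⟩
  have lift_comp_map : (d.lift (eval A G) hd).comp (c.map d hcd) = c.lift (eval A G) hc :=
    Con.hom_ext rfl
  refine ⟨⟨⟨(c.map d hcd).comp f, (c.map d hcd).comp g⟩, ?_⟩, a, ?_, ?_⟩
  · simp only [← MonoidHom.comp_assoc, lift_comp_map, hfg]
  · exact congrArg (c.map d hcd) hx
  · exact congrArg (c.map d hcd) hx'

variable (A G)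

/-- Meeting with `Con.ker (eval A G)` makes `step` monotone on all congruences; below the kernel,
where the whole construction takes place, it is `c ↦ c ⊔ conGen (glue c _)`. -/
def step : Con (FreeProd A G) →o Con (FreeProd A G) where
  toFun c := c ⊓ Con.ker (eval A G) ⊔ conGen (glue (c ⊓ Con.ker (eval A G)) inf_le_right)
  monotone' _ _ h := sup_le_sup (inf_le_inf_right _ h)
    (Con.conGen_mono fun _ _ => glue_mono (inf_le_inf_right _ h) _ _)

lemma step_le_ker (c : Con (FreeProd A G)) : step A G c ≤ Con.ker (eval A G) := by
  refine sup_le inf_le_right (Con.conGen_le.2 ?_)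
  rintro x x' ⟨p, a, hx, hx'⟩
  have := DFunLike.congr_fun p.2 a
  rwa [MonoidHom.comp_apply, MonoidHom.comp_apply, hx, hx', Con.lift_mk', Con.lift_mk'] at this

noncomputable def cover : Con (FreeProd A G) := (step A G).lfp

lemma step_cover : step A G (cover A G) = cover A G := (step A G).map_lfp

lemma cover_le_ker : cover A G ≤ Con.ker (eval A G) :=
  (step_cover A G).ge.trans (step_le_ker A G _)

lemma glue_cover {x x' : FreeProd A G} (h : glue (cover A G) (cover_le_ker A G) x x') :
    cover A G x x' := by
  rw [← step_cover A G]
  refine le_sup_right (a := cover A G ⊓ Con.ker (eval A G)) (ConGen.Rel.of _ _ ?_)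
  exact glue_mono (le_inf le_rfl (cover_le_ker A G)) _ _ h

abbrev Cover : Type u := (cover A G).Quotient

noncomputable def coverMap : Cover A G →* G := (cover A G).lift (eval A G) (cover_le_ker A G)

lemma bijective_comp_coverMap : Bijective fun f : A →* Cover A G => (coverMap A G).comp f := by
  refine ⟨fun f g hfg => MonoidHom.ext fun a => ?_, fun h => ?_⟩
  · obtain ⟨x, hx⟩ := (cover A G).mk'_surjective (f a)
    obtain ⟨x', hx'⟩ := (cover A G).mk'_surjective (g a)
    rw [← hx, ← hx']
    exact (cover A G).eq.2 (glue_cover A G ⟨⟨(f, g), hfg⟩, a, hx.symm, hx'.symm⟩)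
  · refine ⟨(cover A G).mk'.comp (Monoid.CoprodI.of (M := fun _ : A →* G => A) (i := h)), ?_⟩
    ext a
    exact Monoid.CoprodI.lift_of (M := fun _ : A →* G => A) (fun f => f) a

lemma mem_cover {C : GrpCat.{u} → Prop} (hC : ColimClosed C) (hA : C (GrpCat.of A)) :
    C (GrpCat.of (Cover A G)) := by
  refine OrderHom.lfp_induction (p := fun c : Con (FreeProd A G) => C (GrpCat.of c.Quotient)) _
    (fun c hc hle => ?_)
    fun S hS => hC.quotient_sSup (hC.coprodI fun _ => hA) hS
  have hc' : C (GrpCat.of (c ⊓ Con.ker (eval A G)).Quotient) := by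
    rwa [inf_of_le_left (hle.trans (cover_le_ker A G))]
  exact hC.quotient_sup_conGen hc' (fun _ => hA) (fun p : AgreeingPairs _ inf_le_right => p.1.1)
    fun p => p.1.2

end CellularCover

/-- The class `C(A)` is co-reflective: for every group `G` there are a group
`D` in `C(A)` and a homomorphism `φ : D → G` such that for every `L` in `C(A)`
composition with `φ` is a bijection `Hom(L, D) → Hom(L, G)`. -/
theorem stmt9 (A G : GrpCat.{u}) :
    ∃ (D : GrpCat.{u}) (φ : (D : Type u) →* G), cellClass A D ∧
      ∀ L : GrpCat.{u}, cellClass A L →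
        Function.Bijective (fun f : (L : Type u) →* D => φ.comp f) := by
  refine ⟨GrpCat.of (CellularCover.Cover A G), CellularCover.coverMap A G,
    fun C _ hC hA => CellularCover.mem_cover A G hC hA, fun L hL => ?_⟩
  have hA := (GrpCat.bijective_postcomp_ofHom_iff (L := A) (G := G)
    (D := GrpCat.of (CellularCover.Cover A G)) _).2 (CellularCover.bijective_comp_coverMap A G)
  exact (GrpCat.bijective_postcomp_ofHom_iff _).1 (hL.bijective_postcomp _ hA)
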